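/- Let L and P be countable dcpo's, let U ∈ σ(L) with enumeration U = {xₙ : n ∈ ℕ}, and for each n ∈ ℕ let (Wₖ)_{k∈ℕ} be a sequence of Scott open subsets of L such that {xᵢ : i ≤ k} ⊆ Wₖ for every k. Then for every n ∈ ℕ the set Uₙ = (⋂_{k≥n} Wₖ) ∩ U is Scott open in L, and U = ⋃_{n∈ℕ} Uₙ. -/

import Mathlib

/-- A poset is a dcpo if every nonempty directed subset has a least upper bound. -/
def IsDcpo (α : Type*) [Preorder α] : Prop :=
  ∀ D : Set α, D.Nonempty → DirectedOn (· ≤ ·) D → ∃ u, IsLUB D u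

/-- A subset of a poset is Scott open if it is an upper set which is inaccessible by
suprema of directed sets. -/
def IsScottOpen {α : Type*} [Preorder α] (U : Set α) : Prop :=
  IsUpperSet U ∧ DirSupInacc U

/-!
Each point of `U` is some `x j`, so it lies in every `W k` with `k ≥ j`; hence `U` is the union of
the `Uₙ`. For Scott openness of `Uₙ`, let a directed `D` have its supremum in `Uₙ`. Scott openness
of `U` gives `x j ∈ D`, which already lies in all `W k` with `k ≥ j`. The finitely many remaining
`W k`, `n ≤ k < j`, have a Scott open intersection containing the supremum, so by directedness it
contains an element of `D` above `x j`, and that element lies in `Uₙ`.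
-/

open Set Filter Topology

section ScottOpen

variable {α : Type*} [Preorder α] {s : Set α}

theorem isScottOpen_iff_isOpen_scott : IsScottOpen s ↔ IsOpen[scott α univ] s := by
  let := scott α univ
  have : IsScott α univ := ⟨rfl⟩
  rw [IsScott.isOpen_iff_isUpperSet_and_dirSupInaccOn (D := univ), dirSupInaccOn_univ]
  rfl

theorem IsScottOpen.biInter_finset {ι : Type*} {t : Finset ι} {f : ι → Set α}
    (hf : ∀ i ∈ t, IsScottOpen (f i)) : IsScottOpen (⋂ i ∈ t, f i) := by
  simp only [isScottOpen_iff_isOpen_scott] at hf ⊢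
  exact @isOpen_biInter_finset α ι (scott α univ) t f hf

theorem IsScottOpen.exists_ge_mem (hs : IsScottOpen s) {d : Set α}
    (hdir : DirectedOn (· ≤ ·) d) {a : α} (ha : IsLUB d a) (has : a ∈ s) {c : α} (hc : c ∈ d) :
    ∃ e ∈ d, c ≤ e ∧ e ∈ s := by
  obtain ⟨b, hbd, hbs⟩ := hs.2 ⟨c, hc⟩ hdir ha has
  obtain ⟨e, hed, hce, hbe⟩ := hdir c hc b hbd
  exact ⟨e, hed, hce, hs.1 hbe hbs⟩

end ScottOpen

section Tail

variable {α : Type*} {U : Set α} {W : ℕ → Set α}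

theorem isScottOpen_biInter_Ici_inter [Preorder α] (hU : IsScottOpen U)
    (hW : ∀ k, IsScottOpen (W k))
    (hUW : ∀ u ∈ U, ∀ᶠ k in atTop, u ∈ W k) (n : ℕ) :
    IsScottOpen ((⋂ k ∈ {k : ℕ | n ≤ k}, W k) ∩ U) := by
  refine ⟨(isUpperSet_iInter₂ fun k _ ↦ (hW k).1).inter hU.1, ?_⟩
  rintro d hd hdir a ha ⟨haW, haU⟩
  obtain ⟨c, hcd, hcU⟩ := hU.2 hd hdir ha haU
  obtain ⟨j, hcW⟩ := eventually_atTop.1 (hUW c hcU)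
  have hF : IsScottOpen (⋂ k ∈ Finset.Ico n j, W k) :=
    IsScottOpen.biInter_finset fun k _ ↦ hW k
  have haF : a ∈ ⋂ k ∈ Finset.Ico n j, W k :=
    mem_iInter₂.2 fun k hk ↦ mem_iInter₂.1 haW k (Finset.mem_Ico.1 hk).1
  obtain ⟨e, hed, hce, heF⟩ := hF.exists_ge_mem hdir ha haF hcd
  refine ⟨e, hed, mem_iInter₂.2 fun k hnk ↦ ?_, hU.1 hce hcU⟩
  rcases lt_or_ge k j with hkj | hjk
  · exact mem_iInter₂.1 heF k (Finset.mem_Ico.2 ⟨hnk, hkj⟩)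
  · exact (hW k).1 hce (hcW k hjk)

theorem iUnion_biInter_Ici_inter_eq (hUW : ∀ u ∈ U, ∀ᶠ k in atTop, u ∈ W k) :
    ⋃ n : ℕ, (⋂ k ∈ {k : ℕ | n ≤ k}, W k) ∩ U = U := by
  refine Subset.antisymm (iUnion_subset fun _ ↦ inter_subset_right) fun u hu ↦ ?_
  obtain ⟨n, hn⟩ := eventually_atTop.1 (hUW u hu)
  exact mem_iUnion.2 ⟨n, mem_iInter₂.2 hn, hu⟩

end Tail

theorem inter_tail_scottOpen_and_union_eq_general
    (L : Type) [PartialOrder L]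
    (U : Set L) (hU : IsScottOpen U) (x : ℕ → L) (hx : U = Set.range x)
    (W : ℕ → Set L) (hW : ∀ k, IsScottOpen (W k)) (hWx : ∀ k, ∀ i ≤ k, x i ∈ W k) :
    (∀ n : ℕ, IsScottOpen ((⋂ k ∈ {k : ℕ | n ≤ k}, W k) ∩ U)) ∧
    U = ⋃ n : ℕ, (⋂ k ∈ {k : ℕ | n ≤ k}, W k) ∩ U := by
  have hUW : ∀ u ∈ U, ∀ᶠ k in atTop, u ∈ W k := by
    rintro _ hu
    obtain ⟨j, rfl⟩ := hx ▸ hu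
    exact (eventually_ge_atTop j).mono fun k hjk ↦ hWx k j hjk
  exact ⟨isScottOpen_biInter_Ici_inter hU hW hUW, (iUnion_biInter_Ici_inter_eq hUW).symm⟩

/-- Let `L`, `P` be countable dcpo's, `U ∈ σ(L)` with enumeration
`U = {xₙ : n ∈ ℕ}`, and let `(Wₖ)ₖ` be a sequence of Scott open subsets of `L` with
`{xᵢ : i ≤ k} ⊆ Wₖ` for every `k`. Then for every `n` the set
`Uₙ = (⋂_{k ≥ n} Wₖ) ∩ U` is Scott open in `L`, and `U = ⋃ₙ Uₙ`. -/
theorem inter_tail_scottOpen_and_union_eq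
    (L P : Type) [PartialOrder L] [PartialOrder P] [Countable L] [Countable P]
    (hL : IsDcpo L) (hP : IsDcpo P)
    (U : Set L) (hU : IsScottOpen U) (x : ℕ → L) (hx : U = Set.range x)
    (W : ℕ → Set L) (hW : ∀ k, IsScottOpen (W k)) (hWx : ∀ k, ∀ i ≤ k, x i ∈ W k) :
    (∀ n : ℕ, IsScottOpen ((⋂ k ∈ {k : ℕ | n ≤ k}, W k) ∩ U)) ∧
    U = ⋃ n : ℕ, (⋂ k ∈ {k : ℕ | n ≤ k}, W k) ∩ U :=
  inter_tail_scottOpen_and_union_eq_general L U hU x hx W hW hWx
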